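/- Let φ₀ : ℝ → ℝ be differentiable on ℝ with φ₀' differentiable at x₀, and assume φ₀''(x₀) < 0. Let r > 0, let f₀ = exp ∘ φ₀, and define φ_r(y) = exp(−φ₀(y)/r). Then (r³·f₀(x₀)⁴·|φ_r''(x₀)|³ / (φ_r(x₀)³·24³))^{1/5} ≥ (f₀(x₀)⁴·|φ₀''(x₀)|³ / 24³)^{1/5}, with strict inequality whenever φ₀'(x₀) ≠ 0. Indeed, the left-hand side equals (f₀(x₀)^{4/3}·φ₀'(x₀)²/(24·r) + f₀(x₀)^{4/3}·|φ₀''(x₀)|/24)^{3/5}. -/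

import Mathlib

/-!
At `x₀` one has `r · |φ_r''| / φ_r = φ₀'² / r + |φ₀''|`, so the s-concave constant is the
log-concave constant with `|φ₀''|` replaced by the larger quantity `φ₀'² / r + |φ₀''|`, and both
constants are increasing in that quantity.
-/

open Real Set

theorem deriv_deriv_exp_comp {g : ℝ → ℝ} {x : ℝ} (hg : Differentiable ℝ g)
    (hg' : DifferentiableAt ℝ (deriv g) x) :
    deriv (deriv fun y => exp (g y)) x = exp (g x) * (deriv g x ^ 2 + deriv (deriv g) x) := by
  have hderiv : deriv (fun y => exp (g y)) = fun y => exp (g y) * deriv g y :=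
    funext fun y => deriv_exp (hg y)
  have hsecond : HasDerivAt (fun y => exp (g y) * deriv g y)
      (exp (g x) * deriv g x * deriv g x + exp (g x) * deriv (deriv g) x) x :=
    (hg x).hasDerivAt.exp.mul hg'.hasDerivAt
  rw [hderiv, hsecond.deriv]
  ring

theorem deriv_deriv_exp_neg_div {φ : ℝ → ℝ} {x : ℝ} (hφ : Differentiable ℝ φ)
    (hφ' : DifferentiableAt ℝ (deriv φ) x) (r : ℝ) :
    deriv (deriv fun y => exp (-φ y / r)) x =
      exp (-φ x / r) * (deriv φ x ^ 2 / r ^ 2 - deriv (deriv φ) x / r) := by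
  have hderiv : deriv (fun y => -φ y / r) = fun y => -deriv φ y / r := by
    funext y
    rw [deriv_div_const, deriv.fun_neg]
  have hsecond : deriv (fun y => -deriv φ y / r) x = -deriv (deriv φ) x / r := by
    rw [deriv_div_const, deriv.fun_neg]
  rw [deriv_deriv_exp_comp (by fun_prop) (hderiv ▸ hφ'.neg.div_const r), hderiv, hsecond]
  ring

theorem mul_abs_mul_div_self {r P a b : ℝ} (hr : 0 < r) (hP : 0 < P) (hb : b ≤ 0) :
    r * |P * (a ^ 2 / r ^ 2 - b / r)| / P = a ^ 2 / r + |b| := by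
  have hnonneg : 0 ≤ a ^ 2 / r ^ 2 - b / r := by
    have : b / r ≤ 0 := div_nonpos_of_nonpos_of_nonneg hb hr.le
    have : 0 ≤ a ^ 2 / r ^ 2 := by positivity
    linarith
  rw [abs_of_nonneg (mul_nonneg hP.le hnonneg), abs_of_nonpos hb]
  field_simp
  ring

theorem strictMonoOn_rpow_mul_pow_div {F c p : ℝ} {n : ℕ} (hF : 0 < F) (hc : 0 < c)
    (hp : 0 < p) (hn : n ≠ 0) :
    StrictMonoOn (fun t : ℝ => (F * t ^ n / c) ^ p) (Ici 0) := by
  intro s (hs : 0 ≤ s) t _ hst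
  exact rpow_lt_rpow (by positivity) (by gcongr) hp

theorem pow_four_mul_pow_three_div_rpow_one_fifth {F t c : ℝ} (hF : 0 ≤ F) (ht : 0 ≤ t)
    (hc : 0 ≤ c) :
    (F ^ 4 * t ^ 3 / c ^ 3) ^ ((1 : ℝ) / 5) = (F ^ ((4 : ℝ) / 3) * t / c) ^ ((3 : ℝ) / 5) := by
  have hF4 : F ^ 4 = (F ^ ((4 : ℝ) / 3)) ^ 3 := by
    rw [← rpow_mul_natCast hF, ← rpow_natCast]
    norm_num
  rw [hF4, ← mul_pow, ← div_pow, ← rpow_natCast_mul (by positivity)]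
  norm_num

/-- Comparison of the s-concave and log-concave constants `d^{(1)}_{2,sc}` and
`d^{(1)}_{2,lc}` for the density derivative: the s-concave constant is at least the
log-concave one, strictly whenever `φ₀'(x₀) ≠ 0`, with the explicit expression for the
s-concave constant. -/
theorem sc_ge_lc_constant_derivative
    (φ₀ : ℝ → ℝ) (x₀ r : ℝ) (hr : 0 < r)
    (hd : Differentiable ℝ φ₀) (hd2 : DifferentiableAt ℝ (deriv φ₀) x₀)
    (hneg : deriv (deriv φ₀) x₀ < 0)
    (f₀ φr : ℝ → ℝ)
    (hf₀ : f₀ = fun y => Real.exp (φ₀ y))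
    (hφr : φr = fun y => Real.exp (-φ₀ y / r)) :
    (f₀ x₀ ^ 4 * |deriv (deriv φ₀) x₀| ^ 3 / 24 ^ 3) ^ ((1 : ℝ) / 5) ≤
        (r ^ 3 * f₀ x₀ ^ 4 * |deriv (deriv φr) x₀| ^ 3 / (φr x₀ ^ 3 * 24 ^ 3)) ^
          ((1 : ℝ) / 5) ∧
      (deriv φ₀ x₀ ≠ 0 →
        (f₀ x₀ ^ 4 * |deriv (deriv φ₀) x₀| ^ 3 / 24 ^ 3) ^ ((1 : ℝ) / 5) <
          (r ^ 3 * f₀ x₀ ^ 4 * |deriv (deriv φr) x₀| ^ 3 / (φr x₀ ^ 3 * 24 ^ 3)) ^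
            ((1 : ℝ) / 5)) ∧
      (r ^ 3 * f₀ x₀ ^ 4 * |deriv (deriv φr) x₀| ^ 3 / (φr x₀ ^ 3 * 24 ^ 3)) ^
          ((1 : ℝ) / 5) =
        (f₀ x₀ ^ ((4 : ℝ) / 3) * (deriv φ₀ x₀) ^ 2 / (24 * r) +
          f₀ x₀ ^ ((4 : ℝ) / 3) * |deriv (deriv φ₀) x₀| / 24) ^ ((3 : ℝ) / 5) := by
  have hf₀pos : 0 < f₀ x₀ := hf₀ ▸ exp_pos _
  have hφrpos : 0 < φr x₀ := hφr ▸ exp_pos _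
  have hratio : r * |deriv (deriv φr) x₀| / φr x₀ =
      deriv φ₀ x₀ ^ 2 / r + |deriv (deriv φ₀) x₀| := by
    subst hφr
    rw [deriv_deriv_exp_neg_div hd hd2]
    exact mul_abs_mul_div_self hr (exp_pos _) hneg.le
  have hsc : r ^ 3 * f₀ x₀ ^ 4 * |deriv (deriv φr) x₀| ^ 3 / (φr x₀ ^ 3 * 24 ^ 3) =
      f₀ x₀ ^ 4 * (deriv φ₀ x₀ ^ 2 / r + |deriv (deriv φ₀) x₀|) ^ 3 / 24 ^ 3 := by
    rw [← hratio]
    ring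
  have hmono := strictMonoOn_rpow_mul_pow_div (pow_pos hf₀pos 4) (by norm_num : (0 : ℝ) < 24 ^ 3)
    (by norm_num : (0 : ℝ) < 1 / 5) (by norm_num : 3 ≠ 0)
  have hb : 0 ≤ |deriv (deriv φ₀) x₀| := abs_nonneg _
  rw [hsc]
  refine ⟨?_, fun ha => ?_, ?_⟩
  · exact hmono.monotoneOn hb (mem_Ici.2 (by positivity)) (le_add_of_nonneg_left (by positivity))
  · exact hmono hb (mem_Ici.2 (by positivity)) (lt_add_of_pos_left _ (by positivity))
  · rw [pow_four_mul_pow_three_div_rpow_one_fifth hf₀pos.le (by positivity) (by norm_num)]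
    ring_nf
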